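/- For any nontrivial knot K, the ascending number satisfies a(K) ≤ ⌊(c(K) − 1)/2⌋, where c(K) is the minimal crossing number of K and ⌊x⌋ denotes the greatest integer not exceeding x. -/

import Mathlib

noncomputable section

open Set Metric Real

/-- Euclidean 3-space, the ambient space for links. -/
abbrev R3 : Type := EuclideanSpace ℝ (Fin 3)

/-- The Euclidean plane, where link diagrams live. -/
abbrev R2 : Type := EuclideanSpace ℝ (Fin 2)

/-- Convenient constructor for points of `R3`. -/
def v3 (a b c : ℝ) : R3 := WithLp.toLp 2 ![a, b, c]

/-- Convenient constructor for points of `R2`. -/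
def v2 (a b : ℝ) : R2 := WithLp.toLp 2 ![a, b]

/-- The projection of `ℝ³` onto the plane of the diagram. -/
def pr (x : R3) : R2 := v2 (x 0) (x 1)

/-- The height function on `ℝ³` (the coordinate forgotten by `pr`). -/
def ht (x : R3) : ℝ := x 2

/-- The parametrizing circle `ℝ/ℤ`. -/
abbrev S1 : Type := AddCircle (1 : ℝ)

instance : Fact ((0 : ℝ) < 1) := ⟨one_pos⟩

/-- The time in `[0,1)` at which the point of parameter `t` is visited when
traversing a component from its basepoint (parameter `0`) in the direction
of its orientation. -/
def tOf (t : S1) : ℝ := (AddCircle.equivIco 1 0 t).1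

/-- A link with `n` ordered components: a (tame, i.e. polygonal up to
parametrization) topological embedding of `n` disjoint circles into `ℝ³`.
The component carrying a point `(i, t)` is `i` (this gives the ordering), the
orientation of each component is the one induced by the parametrization, and
the basepoint of each component is the point of parameter `0`.  (Working in
the piecewise linear category, every component is required to have polygonal
image.) -/
structure Link (n : ℕ) where
  emb : Fin n × S1 → R3
  continuous : Continuous emb
  injective : Function.Injective emb
  polygonal : ∀ i : Fin n, ∃ F : Finset (R3 × R3),
    (Set.range fun t : S1 => emb (i, t)) = ⋃ s ∈ F, segment ℝ s.1 s.2

/-- `Carries L A` : some ambient isotopy of `ℝ³` carries (the image of) `L`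
onto the set `A`. -/
def Carries {n : ℕ} (L : Link n) (A : Set R3) : Prop :=
  ∃ H : ℝ → (R3 ≃ₜ R3),
    Continuous (fun p : ℝ × R3 => H p.1 p.2) ∧
    H 0 = Homeomorph.refl R3 ∧
    (H 1) '' (Set.range L.emb) = A

/-- Two links are equivalent if an ambient isotopy carries one onto the other. -/
def LinkEquiv {n : ℕ} (L₁ L₂ : Link n) : Prop := Carries L₁ (Set.range L₂.emb)

/-- The set of double points (crossing points) of the projection of a link. -/
def doublePts {n : ℕ} (L : Link n) : Set R2 :=
  {x | ∃ u v : Fin n × S1, u ≠ v ∧ pr (L.emb u) = x ∧ pr (L.emb v) = x}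

/-- A (based ordered oriented) link diagram: a link in regular position with
respect to the projection `pr`; there are finitely many crossings, each
crossing is a transverse double point, and no basepoint lies over a
crossing. -/
structure Diagram (n : ℕ) extends Link n where
  finiteCrossings : (doublePts toLink).Finite
  doubleOnly : ∀ x ∈ doublePts toLink, ∃ u v : Fin n × S1, u ≠ v ∧
    pr (toLink.emb u) = x ∧ pr (toLink.emb v) = x ∧
    ∀ w : Fin n × S1, pr (toLink.emb w) = x → w = u ∨ w = v
  baseFree : ∀ i : Fin n, pr (toLink.emb (i, 0)) ∉ doublePts toLink

/-- `u` is encountered strictly before `v` when the components of a diagram are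
traversed in order, each from its basepoint in the direction of its
orientation. -/
def encBefore {n : ℕ} (u v : Fin n × S1) : Prop :=
  u.1 < v.1 ∨ (u.1 = v.1 ∧ tOf u.2 < tOf v.2)

/-- The crossing `x` of the diagram `D` is ascending: it is first encountered
as an under-crossing.  These are exactly the crossings at which `D` differs
from its descending diagram `d(D)`. -/
def AscendingAt {n : ℕ} (D : Diagram n) (x : R2) : Prop :=
  ∃ u v : Fin n × S1, pr (D.emb u) = x ∧ pr (D.emb v) = x ∧
    encBefore u v ∧ ht (D.emb u) < ht (D.emb v)

/-- A diagram is descending if every crossing is first encountered as an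
over-crossing; equivalently, it coincides with its descending diagram. -/
def IsDescending {n : ℕ} (D : Diagram n) : Prop :=
  ∀ x ∈ doublePts D.toLink, ¬ AscendingAt D x

/-- The ascending number `a(D̃)` of a diagram: the number of crossings at which
`D` differs from its descending diagram `d(D)`. -/
def diagAsc {n : ℕ} (D : Diagram n) : ℕ := {x : R2 | AscendingAt D x}.ncard

/-- The ascending number `a(L)` of a link: the minimum of `a(D̃)` over all
based ordered oriented diagrams of `L`. -/
def ascNum {n : ℕ} (L : Link n) : ℕ :=
  sInf {m : ℕ | ∃ D : Diagram n, LinkEquiv D.toLink L ∧ diagAsc D = m}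

/-- The minimal crossing number `c(L)` of a link. -/
def crossingNum {n : ℕ} (L : Link n) : ℕ :=
  sInf {m : ℕ | ∃ D : Diagram n, LinkEquiv D.toLink L ∧ (doublePts D.toLink).ncard = m}

/-- The closed unit disk in the plane. -/
def Disk2 : Set R2 := Metric.closedBall 0 1

/-- The unit circle, boundary of `Disk2`. -/
def Circ2 : Set R2 := Metric.sphere 0 1

/-- The components of `L` indexed by `S` form a trivial link: they bound
disjoint embedded disks. -/
def SubTrivial {n : ℕ} (L : Link n) (S : Set (Fin n)) : Prop :=
  ∃ F : Fin n × R2 → R3,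
    ContinuousOn F (S ×ˢ Disk2) ∧ Set.InjOn F (S ×ˢ Disk2) ∧
    ∀ i ∈ S, (Set.range fun t : S1 => L.emb (i, t)) = F '' ({i} ×ˢ Circ2)

/-- A trivial link: all components bound disjoint embedded disks. -/
def IsTrivialLink {n : ℕ} (L : Link n) : Prop := SubTrivial L Set.univ

/-- The set of crossings at which the two diagrams `D`, `D'` (assumed to have
the same underlying projection) differ, i.e. where a crossing change has been
performed. -/
def diffCrossings {n : ℕ} (D D' : Diagram n) : Set R2 :=
  {x : R2 | ∃ u v : Fin n × S1, u ≠ v ∧ pr (D.emb u) = x ∧ pr (D.emb v) = x ∧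
    ht (D.emb u) < ht (D.emb v) ∧ ht (D'.emb v) < ht (D'.emb u)}

/-- The unknotting (unlinking) number `u(L)`: the minimal number of crossing
changes, over all diagrams of `L`, needed to turn `L` into a trivial link. -/
def unknottingNum {n : ℕ} (L : Link n) : ℕ :=
  sInf {m : ℕ | ∃ D D' : Diagram n, LinkEquiv D.toLink L ∧
    pr ∘ D'.emb = pr ∘ D.emb ∧ IsTrivialLink D'.toLink ∧
    (diffCrossings D D').ncard = m}

/-- The set of points of (the domain of) `L` at which the height function has
a local maximum. -/
def maxSet {n : ℕ} (L : Link n) : Set (Fin n × S1) :=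
  {u | IsLocalMax (fun w => ht (L.emb w)) u}

/-- The number of local maxima (counted as connected families) of the height
function on a given embedding. -/
def bridgeCount {n : ℕ} (L : Link n) : ℕ :=
  Nat.card (ConnectedComponents ↥(maxSet L))

/-- The bridge number `b(L)`: the minimal number of local maxima of the height
function over all embeddings of `L`. -/
def bridgeNum {n : ℕ} (L : Link n) : ℕ :=
  sInf {m : ℕ | ∃ G : Link n, LinkEquiv G L ∧
    Finite (ConnectedComponents ↥(maxSet G)) ∧ bridgeCount G = m}

/-- The `i`-th component of a link, as a knot. -/
def component {n : ℕ} (L : Link n) (i : Fin n) : Link 1 where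
  emb := fun p => L.emb (i, p.2)
  continuous := L.continuous.comp (continuous_const.prodMk continuous_snd)
  injective := by
    rintro ⟨a1, a2⟩ ⟨b1, b2⟩ hab
    have h := L.injective hab
    rw [Prod.mk.injEq] at h
    rw [Prod.mk.injEq]
    exact ⟨Subsingleton.elim _ _, h.2⟩
  polygonal := fun _ => L.polygonal i

/-- The 2-component sublink of `L` on the (distinct) components `i` and `j`. -/
def pairSub {n : ℕ} (L : Link n) (i j : Fin n) (hij : i ≠ j) : Link 2 where
  emb := fun p => L.emb (![i, j] p.1, p.2)
  continuous := L.continuous.comp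
    (((continuous_of_discreteTopology (f := fun k : Fin 2 => ![i, j] k)).comp
      continuous_fst).prodMk continuous_snd)
  injective := by
    rintro ⟨a1, a2⟩ ⟨b1, b2⟩ hab
    have h := L.injective hab
    rw [Prod.mk.injEq] at h
    rw [Prod.mk.injEq]
    refine ⟨?_, h.2⟩
    have h1 := h.1
    fin_cases a1 <;> fin_cases b1 <;> simp_all
  polygonal := by
    intro k
    fin_cases k
    · simpa using L.polygonal i
    · simpa using L.polygonal j

/-- An arc with endpoints `a` and `b`. -/
def IsArc (γ : Set R3) (a b : R3) : Prop :=
  ∃ f : ℝ → R3, ContinuousOn f (Icc (0:ℝ) 1) ∧ Set.InjOn f (Icc (0:ℝ) 1) ∧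
    f '' Icc (0:ℝ) 1 = γ ∧ f 0 = a ∧ f 1 = b

/-- `K` is a connected sum of the knots `K₁` and `K₂`: after an ambient
isotopy there is a round 2-sphere meeting `K` in exactly two points, and
capping off the two resulting arcs of `K` with an arc on the sphere produces
knots equivalent to `K₁` (inside) and `K₂` (outside). -/
def IsConnectedSum (K K₁ K₂ : Link 1) : Prop :=
  ∃ K' : Link 1, LinkEquiv K' K ∧
  ∃ (c : R3) (r : ℝ), 0 < r ∧ ∃ a b : R3, a ≠ b ∧
    Set.range K'.emb ∩ sphere c r = {a, b} ∧
    ∃ γ : Set R3, IsArc γ a b ∧ γ ⊆ sphere c r ∧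
      Carries K₁ ((Set.range K'.emb ∩ closedBall c r) ∪ γ) ∧
      Carries K₂ ((Set.range K'.emb \ ball c r) ∪ γ)

/-- `IsIterConnSum E m K` : `K` is a connected sum of `m` copies of the knot
`E` (the empty sum being the unknot). -/
inductive IsIterConnSum (E : Link 1) : ℕ → Link 1 → Prop
  | zero (K : Link 1) : IsTrivialLink K → IsIterConnSum E 0 K
  | succ (m : ℕ) (K' K : Link 1) : IsIterConnSum E m K' → IsConnectedSum K K' E →
      IsIterConnSum E (m + 1) K

/-- First strand of the twist region: one of the two strands of a double helix
with `m` half-twists. -/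
def helixA (m : ℤ) : Set R3 :=
  (fun t : ℝ => v3 (cos (π * m * t)) (sin (π * m * t)) (1 + t)) '' Icc 0 1

/-- Second strand of the twist region. -/
def helixB (m : ℤ) : Set R3 :=
  (fun t : ℝ => v3 (-cos (π * m * t)) (-sin (π * m * t)) (1 + t)) '' Icc 0 1

/-- The fold of the hairpin: a semicircle joining the bottoms of the two
helical strands. -/
def bottomArc : Set R3 := (fun θ : ℝ => v3 (cos θ) (sin θ) 1) '' Icc π (2 * π)

/-- The clasp: a polygonal arc joining the two top endpoints of the double
helix which passes once through the eye of the hairpin, clasping the fold. -/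
def capArc (m : ℤ) : Set R3 :=
  segment ℝ (v3 1 0 2) (v3 3 0 2) ∪
  segment ℝ (v3 3 0 2) (v3 3 0 (1/2)) ∪
  segment ℝ (v3 3 0 (1/2)) (v3 0 (-(1/2)) (1/2)) ∪
  segment ℝ (v3 0 (-(1/2)) (1/2)) (v3 0 (-(1/2)) (1 + 1/|(m : ℝ)|)) ∪
  segment ℝ (v3 0 (-(1/2)) (1 + 1/|(m : ℝ)|)) (v3 0 (-3) (1 + 1/|(m : ℝ)|)) ∪
  segment ℝ (v3 0 (-3) (1 + 1/|(m : ℝ)|)) (v3 0 (-3) 3) ∪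
  segment ℝ (v3 0 (-3) 3) (v3 (-1) 0 3) ∪
  segment ℝ (v3 (-1) 0 3) (v3 (-1) 0 2)

/-- The standard twist knot with `m` half-twists and a clasp: a hairpin with
`m` half-twists whose end is passed through its eye (`m = 1` gives the
trefoil, `m = 2` the figure-eight knot, then `5₂`, `6₁`, ...; negative `m`
gives the mirror images). -/
def twistSet (m : ℤ) : Set R3 := helixA m ∪ helixB m ∪ bottomArc ∪ capArc m

/-- `K` is a twist knot: a nontrivial knot obtained from a sequence of
half-twists by adding a clasp. -/
def IsTwistKnot (K : Link 1) : Prop :=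
  ¬ IsTrivialLink K ∧ ∃ m : ℤ, Carries K (twistSet m)

/-- The standard Hopf link: two round circles linked once. -/
def hopfSet : Set R3 :=
  (Set.range fun θ : ℝ => v3 (cos θ) (sin θ) 0) ∪
  (Set.range fun θ : ℝ => v3 (1 + cos θ) 0 (sin θ))

/-- `L` is a Hopf link. -/
def IsHopfLink (L : Link 2) : Prop := Carries L hopfSet

/-- The standard `(p,q)` curve on the torus of revolution: it winds `p` times
around the meridian and `q` times around the longitude. -/
def torusCurve (p q : ℕ) : Set R3 :=
  Set.range fun t : ℝ =>
    v3 (((2 : ℝ) + cos (2 * π * p * t)) * cos (2 * π * q * t))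
       (((2 : ℝ) + cos (2 * π * p * t)) * sin (2 * π * q * t))
       (sin (2 * π * p * t))

/-- `K` is the `(p,q)`-torus knot. -/
def IsTorusKnot (p q : ℕ) (K : Link 1) : Prop := Carries K (torusCurve p q)

/-- The components of `L` indexed by `S` are split from the remaining ones by
a round 2-sphere. -/
def SplitAt {n : ℕ} (L : Link n) (S : Set (Fin n)) : Prop :=
  ∃ (c : R3) (r : ℝ), 0 < r ∧
    (∀ i ∈ S, ∀ t : S1, L.emb (i, t) ∈ ball c r) ∧
    (∀ i ∉ S, ∀ t : S1, L.emb (i, t) ∉ closedBall c r)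

/-- `L` is completely splittable: its components can be separated by disjoint
embedded 2-spheres (equivalently, after an ambient isotopy they lie in
pairwise disjoint round balls). -/
def CompletelySplittable {n : ℕ} (L : Link n) : Prop :=
  ∃ L' : Link n, LinkEquiv L' L ∧ ∃ (c : Fin n → R3) (r : Fin n → ℝ),
    (∀ i, 0 < r i) ∧
    (Set.univ : Set (Fin n)).Pairwise
      (fun i j => Disjoint (closedBall (c i) (r i)) (closedBall (c j) (r j))) ∧
    ∀ (i : Fin n) (t : S1), L'.emb (i, t) ∈ ball (c i) (r i)

/-! Let `D` be a diagram of `K` with `c = c(K)` crossings and `A` its set of ascending crossings.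
Reversing the orientation makes exactly the crossings outside `A` ascending, so
`a(K) ≤ min (|A|, c - |A|)`. Moving the basepoint forward past the first passage over a crossing,
and past no other, changes the status of that crossing only, giving a diagram `D'` of `K` with the
same crossings and `|A'| = |A| ± 1`; with the same bound for `D'` this forces `2 a(K) + 1 ≤ c`. -/

lemma eq_of_pr_eq_of_ht_eq {x y : R3} (hpr : pr x = pr y) (hht : ht x = ht y) : x = y := by
  ext i
  fin_cases i
  · simpa [pr, v2] using congrArg (· 0) hpr
  · simpa [pr, v2] using congrArg (· 1) hpr
  · exact hht

lemma tOf_coe (r : ℝ) : tOf r = Int.fract r := by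
  simp [tOf]

lemma coe_tOf (t : S1) : ((tOf t : ℝ) : S1) = t :=
  (AddCircle.equivIco 1 0).symm_apply_apply t

lemma tOf_injective : Function.Injective tOf := fun a b h => by
  rw [← coe_tOf a, ← coe_tOf b, h]

lemma tOf_mem_Ico (t : S1) : tOf t ∈ Ico (0 : ℝ) 1 := by
  simpa [tOf] using (AddCircle.equivIco 1 0 t).2

lemma tOf_neg {t : S1} (ht : t ≠ 0) : tOf (-t) = 1 - tOf t := by
  have hfract : Int.fract (tOf t) = tOf t := Int.fract_eq_self.2 (tOf_mem_Ico t)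
  have hne : tOf t ≠ 0 := fun h => ht (by rw [← coe_tOf t, h, QuotientAddGroup.mk_zero])
  have hneg : -t = ((-tOf t : ℝ) : S1) := by rw [AddCircle.coe_neg, coe_tOf]
  rw [hneg, tOf_coe, Int.fract_neg (hfract.symm ▸ hne), hfract]

lemma tOf_sub_of_le {t : S1} {s : ℝ} (hs : 0 ≤ s) (h : s ≤ tOf t) : tOf (t - s) = tOf t - s := by
  rw [← coe_tOf t, ← AddCircle.coe_sub, tOf_coe, coe_tOf,
    Int.fract_eq_self.2 ⟨by linarith, by linarith [(tOf_mem_Ico t).2]⟩]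

lemma tOf_sub_of_lt {t : S1} {s : ℝ} (h : tOf t < s) (hs : s ≤ 1) :
    tOf (t - s) = tOf t - s + 1 := by
  rw [← coe_tOf t, ← AddCircle.coe_sub, tOf_coe, coe_tOf, Int.fract_eq_iff]
  exact ⟨by linarith [(tOf_mem_Ico t).1], by linarith, -1, by push_cast; ring⟩

lemma encBefore_iff_of_fin_one (u v : Fin 1 × S1) : encBefore u v ↔ tOf u.2 < tOf v.2 := by
  simp [encBefore, Subsingleton.elim u.1 v.1]

lemma snd_injective_of_fin_one : Function.Injective (Prod.snd : Fin 1 × S1 → S1) :=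
  fun _ _ h => Prod.ext (Subsingleton.elim _ _) h

lemma Set.ncard_eq_add_one_or_of_mem_iff {α : Type*} {A B : Set α} (hB : B.Finite) {a : α}
    (h : ∀ x, x ∈ A ↔ (x ∈ B ↔ x ≠ a)) : A.ncard = B.ncard + 1 ∨ B.ncard = A.ncard + 1 := by
  by_cases haB : a ∈ B
  · have hA : A = B \ {a} := by
      ext x
      by_cases hx : x = a <;> simp [h, hx, haB]
    exact Or.inr (hA ▸ (Set.ncard_sdiff_singleton_add_one haB hB).symm)
  · have hA : A = insert a B := by
      ext x
      by_cases hx : x = a <;> simp [h, hx, haB]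
    exact Or.inl (hA ▸ Set.ncard_insert_of_notMem haB hB)

structure IsCrossing {α : Type*} (f : α → R3) (x : R2) (lo hi : α) : Prop where
  pr_lo : pr (f lo) = x
  pr_hi : pr (f hi) = x
  ht_lt : ht (f lo) < ht (f hi)
  eq_or_eq : ∀ w, pr (f w) = x → w = lo ∨ w = hi

namespace IsCrossing

variable {α β : Type*} {f : α → R3} {x : R2} {lo hi : α}

lemma ne (h : IsCrossing f x lo hi) : lo ≠ hi := by
  rintro rfl
  exact h.ht_lt.false

lemma comp_equiv (h : IsCrossing f x lo hi) (e : β ≃ α) :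
    IsCrossing (f ∘ e) x (e.symm lo) (e.symm hi) where
  pr_lo := by simpa using h.pr_lo
  pr_hi := by simpa using h.pr_hi
  ht_lt := by simpa using h.ht_lt
  eq_or_eq w hw := (h.eq_or_eq (e w) hw).imp e.eq_symm_apply.2 e.eq_symm_apply.2

lemma ascendingAt_iff {D : Diagram 1} {x : R2} {lo hi : Fin 1 × S1}
    (h : IsCrossing D.emb x lo hi) : AscendingAt D x ↔ tOf lo.2 < tOf hi.2 := by
  refine ⟨?_, fun hlt => ⟨lo, hi, h.pr_lo, h.pr_hi, (encBefore_iff_of_fin_one _ _).2 hlt, h.ht_lt⟩⟩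
  rintro ⟨u, v, hu, hv, huv, hlt⟩
  rw [encBefore_iff_of_fin_one] at huv
  rcases h.eq_or_eq u hu with rfl | rfl <;> rcases h.eq_or_eq v hv with rfl | rfl
  · exact absurd hlt (lt_irrefl _)
  · exact huv
  · exact absurd hlt h.ht_lt.asymm
  · exact absurd hlt (lt_irrefl _)

end IsCrossing

lemma AscendingAt.mem_doublePts {n : ℕ} {D : Diagram n} {x : R2} (h : AscendingAt D x) :
    x ∈ doublePts D.toLink := by
  obtain ⟨u, v, hu, hv, huv, -⟩ := h
  refine ⟨u, v, ?_, hu, hv⟩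
  rintro rfl
  rcases huv with h | ⟨-, h⟩ <;> exact lt_irrefl _ h

namespace Diagram

variable {n : ℕ}

lemma exists_isCrossing (D : Diagram n) {x : R2} (hx : x ∈ doublePts D.toLink) :
    ∃ lo hi, IsCrossing D.emb x lo hi := by
  obtain ⟨u, v, huv, hu, hv, hw⟩ := D.doubleOnly x hx
  have hht : ht (D.emb u) ≠ ht (D.emb v) := fun h =>
    huv (D.injective (eq_of_pr_eq_of_ht_eq (hu.trans hv.symm) h))
  rcases hht.lt_or_gt with hlt | hlt
  · exact ⟨u, v, hu, hv, hlt, hw⟩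
  · exact ⟨v, u, hv, hu, hlt, fun w hw' => (hw w hw').symm⟩

lemma finite_passages (D : Diagram n) : {w | pr (D.emb w) ∈ doublePts D.toLink}.Finite := by
  refine D.finiteCrossings.preimage' (f := pr ∘ D.emb) fun x hx => ?_
  obtain ⟨lo, hi, h⟩ := D.exists_isCrossing hx
  exact (Set.toFinite {lo, hi}).subset fun w hw => h.eq_or_eq w hw

lemma setOf_ascendingAt_subset (D : Diagram n) : {x | AscendingAt D x} ⊆ doublePts D.toLink :=
  fun _ hx => AscendingAt.mem_doublePts hx

lemma diagAsc_le (D : Diagram n) : diagAsc D ≤ (doublePts D.toLink).ncard :=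
  Set.ncard_le_ncard D.setOf_ascendingAt_subset D.finiteCrossings

lemma snd_ne_zero_of_pr_mem_doublePts {D : Diagram 1} {w : Fin 1 × S1}
    (hw : pr (D.emb w) ∈ doublePts D.toLink) : w.2 ≠ 0 := fun h0 => by
  rw [show w = (0, 0) from Prod.ext (Subsingleton.elim _ _) h0] at hw
  exact D.baseFree 0 hw

end Diagram

lemma ascNum_le_diagAsc {n : ℕ} {K : Link n} {D : Diagram n} (hDK : LinkEquiv D.toLink K) :
    ascNum K ≤ diagAsc D :=
  Nat.sInf_le ⟨D, hDK, rfl⟩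

namespace Link

variable {n : ℕ}

def reparamEquiv (n : ℕ) (ρ : S1 ≃ₜ S1) : Fin n × S1 ≃ Fin n × S1 :=
  Equiv.prodCongr (Equiv.refl _) ρ.toEquiv

def reparam (L : Link n) (ρ : S1 ≃ₜ S1) : Link n where
  emb := L.emb ∘ reparamEquiv n ρ
  continuous := L.continuous.comp (continuous_fst.prodMk (ρ.continuous.comp continuous_snd))
  injective := L.injective.comp (Equiv.injective _)
  polygonal i := by
    obtain ⟨F, hF⟩ := L.polygonal i
    exact ⟨F, hF ▸ ρ.surjective.range_comp fun t => L.emb (i, t)⟩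

lemma range_reparam (L : Link n) (ρ : S1 ≃ₜ S1) : range (L.reparam ρ).emb = range L.emb :=
  (Equiv.surjective _).range_comp _

lemma linkEquiv_reparam_iff {L K : Link n} (ρ : S1 ≃ₜ S1) :
    LinkEquiv (L.reparam ρ) K ↔ LinkEquiv L K := by
  simp only [LinkEquiv, Carries, range_reparam]

lemma doublePts_reparam (L : Link n) (ρ : S1 ≃ₜ S1) : doublePts (L.reparam ρ) = doublePts L := by
  ext x
  constructor
  · rintro ⟨u, v, huv, hu, hv⟩
    exact ⟨_, _, (reparamEquiv n ρ).injective.ne huv, hu, hv⟩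
  · rintro ⟨u, v, huv, hu, hv⟩
    refine ⟨(reparamEquiv n ρ).symm u, (reparamEquiv n ρ).symm v,
      (reparamEquiv n ρ).symm.injective.ne huv, ?_, ?_⟩ <;> simpa [reparam]

end Link

namespace Diagram

variable {n : ℕ}

def reparam (D : Diagram n) (ρ : S1 ≃ₜ S1)
    (hb : ∀ i, pr (D.emb (i, ρ 0)) ∉ doublePts D.toLink) : Diagram n where
  toLink := D.toLink.reparam ρ
  finiteCrossings := by rw [Link.doublePts_reparam]; exact D.finiteCrossings
  doubleOnly x hx := by
    rw [Link.doublePts_reparam] at hx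
    obtain ⟨lo, hi, h⟩ := D.exists_isCrossing hx
    have h' := h.comp_equiv (Link.reparamEquiv n ρ)
    exact ⟨_, _, h'.ne, h'.pr_lo, h'.pr_hi, h'.eq_or_eq⟩
  baseFree i := by rw [Link.doublePts_reparam]; exact hb i

section

variable {D : Diagram n} {ρ : S1 ≃ₜ S1} {hb : ∀ i, pr (D.emb (i, ρ 0)) ∉ doublePts D.toLink}

lemma doublePts_reparam : doublePts (D.reparam ρ hb).toLink = doublePts D.toLink :=
  Link.doublePts_reparam _ _

lemma linkEquiv_reparam_iff {K : Link n} :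
    LinkEquiv (D.reparam ρ hb).toLink K ↔ LinkEquiv D.toLink K :=
  Link.linkEquiv_reparam_iff ρ

end

lemma ascendingAt_reparam_iff {D : Diagram 1} {ρ : S1 ≃ₜ S1}
    {hb : ∀ i, pr (D.emb (i, ρ 0)) ∉ doublePts D.toLink} {x : R2} {lo hi : Fin 1 × S1}
    (h : IsCrossing D.emb x lo hi) :
    AscendingAt (D.reparam ρ hb) x ↔ tOf (ρ.symm lo.2) < tOf (ρ.symm hi.2) :=
  IsCrossing.ascendingAt_iff (D := D.reparam ρ hb) (h.comp_equiv (Link.reparamEquiv 1 ρ))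

def reverse (D : Diagram 1) : Diagram 1 :=
  D.reparam (Homeomorph.neg S1) (by simpa using D.baseFree)

lemma ascendingAt_reverse_iff (D : Diagram 1) {x : R2} (hx : x ∈ doublePts D.toLink) :
    AscendingAt D.reverse x ↔ ¬ AscendingAt D x := by
  obtain ⟨lo, hi, h⟩ := D.exists_isCrossing hx
  have hlo : lo.2 ≠ 0 := snd_ne_zero_of_pr_mem_doublePts (h.pr_lo ▸ hx)
  have hhi : hi.2 ≠ 0 := snd_ne_zero_of_pr_mem_doublePts (h.pr_hi ▸ hx)
  have hne : tOf lo.2 ≠ tOf hi.2 := (tOf_injective.comp snd_injective_of_fin_one).ne h.ne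
  rw [reverse, ascendingAt_reparam_iff h, h.ascendingAt_iff]
  simp only [Homeomorph.symm_neg, Homeomorph.coe_neg]
  rw [tOf_neg hlo, tOf_neg hhi, sub_lt_sub_iff_left, not_lt, lt_iff_le_and_ne]
  exact and_iff_left hne.symm

lemma diagAsc_reverse (D : Diagram 1) :
    diagAsc D.reverse = (doublePts D.toLink).ncard - diagAsc D := by
  have hasc : {x | AscendingAt D.reverse x} = doublePts D.toLink \ {x | AscendingAt D x} := by
    ext x
    constructor
    · intro h
      have hx : x ∈ doublePts D.toLink := by
        simpa only [reverse, doublePts_reparam] using h.mem_doublePts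
      exact ⟨hx, (D.ascendingAt_reverse_iff hx).1 h⟩
    · rintro ⟨hx, h⟩
      exact (D.ascendingAt_reverse_iff hx).2 h
  rw [diagAsc, hasc, Set.ncard_sdiff D.setOf_ascendingAt_subset
    (D.finiteCrossings.subset D.setOf_ascendingAt_subset), diagAsc]

lemma ascendingAt_shift_iff (D : Diagram 1) {w₀ : Fin 1 × S1} {s : ℝ}
    (hw₀ : pr (D.emb w₀) ∈ doublePts D.toLink) (hw₀s : tOf w₀.2 < s) (hs : s ≤ 1)
    (hgap : ∀ w, pr (D.emb w) ∈ doublePts D.toLink → w ≠ w₀ → s < tOf w.2)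
    (hb : ∀ i, pr (D.emb (i, Homeomorph.addRight (s : S1) 0)) ∉ doublePts D.toLink) (x : R2) :
    AscendingAt (D.reparam (Homeomorph.addRight (s : S1)) hb) x ↔
      (AscendingAt D x ↔ x ≠ pr (D.emb w₀)) := by
  by_cases hx : x ∈ doublePts D.toLink
  swap
  · have hx' : x ∉ doublePts (D.reparam (Homeomorph.addRight (s : S1)) hb).toLink := by
      rwa [doublePts_reparam]
    have hx₀ : x ≠ pr (D.emb w₀) := fun h => hx (h ▸ hw₀)
    simp only [hx₀, ne_eq, not_false_eq_true, iff_true]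
    exact ⟨fun h => (hx' h.mem_doublePts).elim, fun h => (hx h.mem_doublePts).elim⟩
  obtain ⟨lo, hi, h⟩ := D.exists_isCrossing hx
  have hs₀ : 0 ≤ s := (tOf_mem_Ico _).1.trans hw₀s.le
  have hold : ∀ w, pr (D.emb w) = x → w ≠ w₀ → tOf (w.2 - s) = tOf w.2 - s :=
    fun w hw hne => tOf_sub_of_le hs₀ (hgap w (hw ▸ hx) hne).le
  have hnew : tOf (w₀.2 - s) = tOf w₀.2 - s + 1 := tOf_sub_of_lt hw₀s hs
  rw [ascendingAt_reparam_iff h, h.ascendingAt_iff]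
  simp only [Homeomorph.addRight_symm, Homeomorph.coe_addRight, ← sub_eq_add_neg]
  by_cases hlo : lo = w₀
  · subst hlo
    have hhi := hgap hi (h.pr_hi ▸ hx) h.ne.symm
    rw [hnew, hold hi h.pr_hi h.ne.symm, ← h.pr_lo]
    simp only [ne_eq, not_true_eq_false, iff_false]
    constructor <;> intro <;> linarith [(tOf_mem_Ico lo.2).1, (tOf_mem_Ico hi.2).2]
  by_cases hhi : hi = w₀
  · subst hhi
    have hlo' := hgap lo (h.pr_lo ▸ hx) hlo
    rw [hnew, hold lo h.pr_lo hlo, ← h.pr_hi]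
    simp only [ne_eq, not_true_eq_false, iff_false]
    constructor <;> intro <;> linarith [(tOf_mem_Ico hi.2).1, (tOf_mem_Ico lo.2).2]
  have hx₀ : x ≠ pr (D.emb w₀) := fun hx₀ =>
    (h.eq_or_eq w₀ hx₀.symm).elim (fun h' => hlo h'.symm) fun h' => hhi h'.symm
  rw [hold lo h.pr_lo hlo, hold hi h.pr_hi hhi, sub_lt_sub_iff_right]
  simp only [hx₀, ne_eq, not_false_eq_true, iff_true]

lemma exists_reparam_ascendingAt_iff (D : Diagram 1) (hD : (doublePts D.toLink).Nonempty) :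
    ∃ ρ hb, ∃ x₀ ∈ doublePts D.toLink,
      ∀ x, AscendingAt (D.reparam ρ hb) x ↔ (AscendingAt D x ↔ x ≠ x₀) := by
  set W := {w | pr (D.emb w) ∈ doublePts D.toLink}
  have hWne : W.Nonempty := by
    obtain ⟨x, hx⟩ := hD
    obtain ⟨lo, hi, h⟩ := D.exists_isCrossing hx
    exact ⟨lo, show pr (D.emb lo) ∈ _ from h.pr_lo ▸ hx⟩
  obtain ⟨w₀, hw₀, hmin⟩ := Set.exists_min_image W (fun w => tOf w.2) D.finite_passages hWne
  obtain ⟨s, hw₀s, hs⟩ := Set.Finite.exists_between' (s := {tOf w₀.2})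
    (t := insert 1 ((fun w => tOf w.2) '' (W \ {w₀}))) (Set.finite_singleton _)
    ((D.finite_passages.sdiff.image _).insert 1) (by
      rintro _ rfl _ (rfl | ⟨w, ⟨hw, hne⟩, rfl⟩)
      · exact (tOf_mem_Ico _).2
      · exact (hmin w hw).lt_of_ne ((tOf_injective.comp snd_injective_of_fin_one).ne (Ne.symm hne)))
  have hgap : ∀ w ∈ W, w ≠ w₀ → s < tOf w.2 := fun w hw hne =>
    hs _ (Set.mem_insert_of_mem _ ⟨w, ⟨hw, hne⟩, rfl⟩)
  replace hw₀s : tOf w₀.2 < s := hw₀s _ rfl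
  have hs1 : s < 1 := hs 1 (Set.mem_insert _ _)
  have hb : ∀ i, pr (D.emb (i, Homeomorph.addRight (s : S1) 0)) ∉ doublePts D.toLink := by
    intro i hmem
    have htOf : tOf (s : S1) = s := by
      rw [tOf_coe, Int.fract_eq_self.2 ⟨(tOf_mem_Ico _).1.trans hw₀s.le, hs1⟩]
    simp only [Homeomorph.coe_addRight, zero_add] at hmem
    by_cases hi : (i, (s : S1)) = w₀
    · exact hw₀s.ne (by rw [← hi, htOf])
    · exact (hgap _ hmem hi).ne htOf.symm
  exact ⟨_, hb, _, hw₀, D.ascendingAt_shift_iff hw₀ hw₀s hs1.le hgap hb⟩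

end Diagram

lemma two_mul_ascNum_add_one_le {K : Link 1} {D : Diagram 1} (hDK : LinkEquiv D.toLink K)
    (hD : (doublePts D.toLink).Nonempty) : 2 * ascNum K + 1 ≤ (doublePts D.toLink).ncard := by
  obtain ⟨ρ, hb, x₀, -, hflip⟩ := D.exists_reparam_ascendingAt_iff hD
  set D' := D.reparam ρ hb
  have hD'K : LinkEquiv D'.toLink K := Diagram.linkEquiv_reparam_iff.2 hDK
  have hc : doublePts D'.toLink = doublePts D.toLink := Diagram.doublePts_reparam
  have hstep : diagAsc D' = diagAsc D + 1 ∨ diagAsc D = diagAsc D' + 1 :=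
    Set.ncard_eq_add_one_or_of_mem_iff (D.finiteCrossings.subset D.setOf_ascendingAt_subset) hflip
  have hasc := ascNum_le_diagAsc hDK
  have hasc' := ascNum_le_diagAsc hD'K
  have hrev := ascNum_le_diagAsc (D := D.reverse) (Diagram.linkEquiv_reparam_iff.2 hDK)
  have hrev' := ascNum_le_diagAsc (D := D'.reverse) (Diagram.linkEquiv_reparam_iff.2 hD'K)
  rw [Diagram.diagAsc_reverse] at hrev
  rw [Diagram.diagAsc_reverse, hc] at hrev'
  have hle := D.diagAsc_le
  have hle' : diagAsc D' ≤ (doublePts D.toLink).ncard := hc ▸ D'.diagAsc_le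
  omega

theorem ascending_le_half_crossing_sub_one_of_nontrivial_general (K : Link 1) :
    ascNum K ≤ (crossingNum K - 1) / 2 := by
  by_cases hK : ∃ D : Diagram 1, LinkEquiv D.toLink K
  · obtain ⟨D₀, hD₀K⟩ := hK
    obtain ⟨D, hDK, hc⟩ : crossingNum K ∈
        {m | ∃ D : Diagram 1, LinkEquiv D.toLink K ∧ (doublePts D.toLink).ncard = m} :=
      Nat.sInf_mem ⟨_, D₀, hD₀K, rfl⟩
    rw [← hc]
    rcases (doublePts D.toLink).eq_empty_or_nonempty with h | h
    · have := (ascNum_le_diagAsc hDK).trans D.diagAsc_le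
      rw [h, Set.ncard_empty] at this
      omega
    · have := two_mul_ascNum_add_one_le hDK h
      omega
  · push Not at hK
    simp [ascNum, hK]

/-- For any nontrivial knot `K`, the ascending number satisfies
`a(K) ≤ ⌊(c(K) − 1)/2⌋`, where `c(K)` is the minimal crossing number. -/
theorem ascending_le_half_crossing_sub_one_of_nontrivial (K : Link 1)
    (hK : ¬ IsTrivialLink K) :
    ascNum K ≤ (crossingNum K - 1) / 2 :=
  ascending_le_half_crossing_sub_one_of_nontrivial_general K

end
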